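/- arXiv:2004.08941 — 6 statements merged into one kernel-verified Lean document; each statement's English description precedes it below -/
import Mathlib

section
/- Let G be a group, let H₁,…,H_s be finite-index subgroups of G with virtual endomorphisms f_i : H_i → G, and suppose the common core is trivial, i.e., the only subgroup K ≤ ∩_{i=1}^s H_i normal in G with f_i(K) ⊆ K for all i is trivial. Let K₀ be a transitive subgroup of Sym({1,…,s}), let W = G ≀ K₀ be the restricted permutational wreath product, let H = H₁ × ⋯ × H_s ≤ G^s ≤ W, and define f : H → G^s ≤ W by f(h₁,…,h_s) = (f₁(h₁),…,f_s(h_s)). Then any subgroup L ≤ H that is normal in W and satisfies f(L) ⊆ L is trivial. -/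
/-!
The images of `L` under the coordinate projections `G^s → G` all coincide, since `K₀` is
transitive and `L` is stable under its coordinate permutations. This common image is normal
in `G` (projections are surjective), contained in every `H i`, and `f i`-invariant for every `i`,
so it is trivial by the core hypothesis; hence so is `L`.
-/

namespace Subgroup

variable {ι G : Type*} [Group G]

theorem map_evalMonoidHom_apply_le {L : Subgroup (ι → G)} {π : Equiv.Perm ι}
    (hL : ∀ g ∈ L, (fun k => g (π k)) ∈ L) (i : ι) :
    L.map (Pi.evalMonoidHom (fun _ => G) (π i)) ≤ L.map (Pi.evalMonoidHom (fun _ => G) i) := by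
  rintro _ ⟨g, hg, rfl⟩
  exact ⟨fun k => g (π k), hL g hg, rfl⟩

theorem map_evalMonoidHom_eq_of_transitive {L : Subgroup (ι → G)}
    {K₀ : Subgroup (Equiv.Perm ι)} (htrans : ∀ i j : ι, ∃ π ∈ K₀, π i = j)
    (hL : ∀ π ∈ K₀, ∀ g ∈ L, (fun k => g (π k)) ∈ L) (i j : ι) :
    L.map (Pi.evalMonoidHom (fun _ => G) i) = L.map (Pi.evalMonoidHom (fun _ => G) j) := by
  have key : ∀ i j : ι,
      L.map (Pi.evalMonoidHom (fun _ => G) j) ≤ L.map (Pi.evalMonoidHom (fun _ => G) i) := by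
    intro i j
    obtain ⟨π, hπ, rfl⟩ := htrans i j
    exact map_evalMonoidHom_apply_le (hL π hπ) i
  exact le_antisymm (key j i) (key i j)

theorem eq_bot_of_forall_map_evalMonoidHom_eq_bot {L : Subgroup (ι → G)}
    (h : ∀ i, L.map (Pi.evalMonoidHom (fun _ => G) i) = ⊥) : L = ⊥ := by
  refine (eq_bot_iff_forall L).2 fun g hg => funext fun i => ?_
  simpa [h i] using mem_map_of_mem (Pi.evalMonoidHom (fun _ => G) i) hg

end Subgroup

theorem stmt2_general {G : Type*} [Group G] {s : ℕ}
    (H : Fin s → Subgroup G)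
    (f : ∀ i, (H i) →* G)
    (hcore : ∀ K : Subgroup G, K.Normal → (∀ i, K ≤ H i) →
      (∀ (i : Fin s) (x : G) (hx : x ∈ H i), x ∈ K → f i ⟨x, hx⟩ ∈ K) → K = ⊥)
    (K₀ : Subgroup (Equiv.Perm (Fin s)))
    (htrans : ∀ i j : Fin s, ∃ π ∈ K₀, π i = j)
    (L : Subgroup (Fin s → G))
    (hLH : ∀ g ∈ L, ∀ i, g i ∈ H i)
    (hLnorm : L.Normal)
    (hLperm : ∀ π ∈ K₀, ∀ g ∈ L, (fun i => g (π i)) ∈ L)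
    (hLf : ∀ (g : Fin s → G) (hg : g ∈ L), (fun i => f i ⟨g i, hLH g hg i⟩) ∈ L) :
    L = ⊥ := by
  have hK := Subgroup.map_evalMonoidHom_eq_of_transitive (G := G) htrans hLperm
  refine Subgroup.eq_bot_of_forall_map_evalMonoidHom_eq_bot fun i =>
    hcore _ (hLnorm.map _ (Function.surjective_eval i)) (fun j => ?_) fun j x hx hxK => ?_
  · rw [hK i j]
    rintro _ ⟨g, hg, rfl⟩
    exact hLH g hg j
  · rw [hK i j] at hxK ⊢
    obtain ⟨g, hg, rfl⟩ := hxK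
    exact ⟨_, hLf g hg, rfl⟩

/-- Let `G` be a group with finite-index subgroups `H i` and virtual endomorphisms
`f i : H i →* G` whose common core is trivial.  Let `K₀` be a transitive subgroup of
`Sym(Fin s)` and form the restricted wreath product `W = G ≀ K₀` with base `G^s = Fin s → G`.
Any subgroup `L` of `H₁ × ⋯ × H_s` which is normal in `W` (i.e. normal in the base group
and stable under the coordinate permutations coming from `K₀`) and `f`-invariant is trivial. -/
theorem stmt2 {G : Type*} [Group G] {s : ℕ} (hs : 1 ≤ s)
    (H : Fin s → Subgroup G) (hfin : ∀ i, (H i).FiniteIndex)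
    (f : ∀ i, (H i) →* G)
    (hcore : ∀ K : Subgroup G, K.Normal → (∀ i, K ≤ H i) →
      (∀ (i : Fin s) (x : G) (hx : x ∈ H i), x ∈ K → f i ⟨x, hx⟩ ∈ K) → K = ⊥)
    (K₀ : Subgroup (Equiv.Perm (Fin s)))
    (htrans : ∀ i j : Fin s, ∃ π ∈ K₀, π i = j)
    (L : Subgroup (Fin s → G))
    (hLH : ∀ g ∈ L, ∀ i, g i ∈ H i)
    (hLnorm : L.Normal)
    (hLperm : ∀ π ∈ K₀, ∀ g ∈ L, (fun i => g (π i)) ∈ L)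
    (hLf : ∀ (g : Fin s → G) (hg : g ∈ L), (fun i => f i ⟨g i, hLH g hg i⟩) ∈ L) :
    L = ⊥ :=
  stmt2_general H f hcore K₀ htrans L hLH hLnorm hLperm hLf
end

section
/- Let G be a group with finite-index subgroups H₁,…,H_s and virtual endomorphisms f_i : H_i → G whose common core is trivial. Let G^(ω) be the restricted direct product of countably many copies of G. For 1 ≤ i ≤ s let L_i = {(g₁,g₂,g₃,…) ∈ G^(ω) : g₁ ∈ H_i} and define f̄_i : L_i → G^(ω) by f̄_i(h,g₂,g₃,…) = (f_i(h),g₂,g₃,…); let f̄_{s+1} : G^(ω) → G^(ω) be the shift (g₁,g₂,…) ↦ (g₂,g₃,…). Then the only subgroup L ≤ ∩_{i=1}^{s+1} L_i normal in G^(ω) with f̄_i(L) ⊆ L for all i = 1,…,s+1 is the trivial subgroup. -/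
/-!
The first coordinates of the elements of `L` form a subgroup `K` of `G` contained in every
`H i`, normal (conjugate by sequences supported at `0`) and invariant under every `f i`;
by triviality of the common core `K = 1`. Since `L` is shift-invariant, every coordinate of
every element of `L` is the first coordinate of some element of `L`, hence trivial.
-/

namespace Subgroup

variable {G : Type*} [Group G]

theorem map_evalMonoidHom_normal {ι : Type*} [DecidableEq ι] {L : Subgroup (ι → G)}
    (hL : ∀ c : ι → G, (Function.mulSupport c).Finite → ∀ g ∈ L, c * g * c⁻¹ ∈ L) (i : ι) :
    (L.map (Pi.evalMonoidHom (fun _ => G) i)).Normal where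
  conj_mem := by
    rintro _ ⟨g, hg, rfl⟩ c
    have hc : (Function.mulSupport (Pi.mulSingle i c)).Finite :=
      (Set.finite_singleton i).subset Pi.mulSupport_mulSingle_subset
    exact ⟨_, hL _ hc g hg, by simp⟩

theorem eq_bot_of_apply_zero_eq_one_of_shift_mem {L : Subgroup (ℕ → G)}
    (hshift : ∀ g ∈ L, (fun n => g (n + 1)) ∈ L) (h0 : ∀ g ∈ L, g 0 = 1) : L = ⊥ := by
  have hall : ∀ n, ∀ g ∈ L, g n = 1 := by
    intro n
    induction n with
    | zero => exact h0
    | succ n ih => exact fun g hg => ih _ (hshift g hg)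
  exact (eq_bot_iff_forall L).2 fun g hg => funext fun n => hall n g hg

end Subgroup

theorem stmt3_general {G : Type*} [Group G] {s : ℕ}
    (H : Fin s → Subgroup G)
    (f : ∀ i, (H i) →* G)
    (hcore : ∀ K : Subgroup G, K.Normal → (∀ i, K ≤ H i) →
      (∀ (i : Fin s) (x : G) (hx : x ∈ H i), x ∈ K → f i ⟨x, hx⟩ ∈ K) → K = ⊥)
    (L : Subgroup (ℕ → G))
    (hLH : ∀ g ∈ L, ∀ i, g 0 ∈ H i)
    (hLnorm : ∀ c : ℕ → G, (Function.mulSupport c).Finite → ∀ g ∈ L, c * g * c⁻¹ ∈ L)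
    (hshift : ∀ g ∈ L, (fun n => g (n + 1)) ∈ L)
    (hLf : ∀ (i : Fin s) (g : ℕ → G) (hg : g ∈ L),
      Function.update g 0 (f i ⟨g 0, hLH g hg i⟩) ∈ L) :
    L = ⊥ := by
  have hK : L.map (Pi.evalMonoidHom (fun _ => G) 0) = ⊥ :=
    hcore _ (Subgroup.map_evalMonoidHom_normal hLnorm 0)
      (by rintro i _ ⟨g, hg, rfl⟩; exact hLH g hg i)
      (by rintro i _ hx ⟨g, hg, rfl⟩; exact ⟨_, hLf i g hg, by simp⟩)
  rw [Subgroup.map_eq_bot_iff] at hK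
  exact Subgroup.eq_bot_of_apply_zero_eq_one_of_shift_mem hshift fun g hg => hK hg

/-- Let `G` be a group with finite-index subgroups `H i` and virtual endomorphisms
`f i : H i →* G` whose common core is trivial.  In the restricted direct product
`G^(ω)` (finitely supported sequences in `ℕ → G`), consider a subgroup `L` consisting
of finitely supported sequences whose first entry lies in every `H i`, which is normal
in `G^(ω)`, invariant under each `f̄ i` (apply `f i` to the first coordinate) and
under the shift `f̄_{s+1}`.  Then `L` is trivial. -/
theorem stmt3 {G : Type*} [Group G] {s : ℕ}
    (H : Fin s → Subgroup G) (hfin : ∀ i, (H i).FiniteIndex)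
    (f : ∀ i, (H i) →* G)
    (hcore : ∀ K : Subgroup G, K.Normal → (∀ i, K ≤ H i) →
      (∀ (i : Fin s) (x : G) (hx : x ∈ H i), x ∈ K → f i ⟨x, hx⟩ ∈ K) → K = ⊥)
    (L : Subgroup (ℕ → G))
    (hLfin : ∀ g ∈ L, (Function.mulSupport g).Finite)
    (hLH : ∀ g ∈ L, ∀ i, g 0 ∈ H i)
    (hLnorm : ∀ c : ℕ → G, (Function.mulSupport c).Finite → ∀ g ∈ L, c * g * c⁻¹ ∈ L)
    (hshift : ∀ g ∈ L, (fun n => g (n + 1)) ∈ L)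
    (hLf : ∀ (i : Fin s) (g : ℕ → G) (hg : g ∈ L),
      Function.update g 0 (f i ⟨g 0, hLH g hg i⟩) ∈ L) :
    L = ⊥ :=
  stmt3_general H f hcore L hLH hLnorm hshift hLf
end

section
/- In the polynomial ring ℤ[x,y], every element s of the ideal generated by x−1 and y−1 can be written uniquely in the form s = p(x)(x−1) + q(y)(y−1) + r(x,y)(x−1)(y−1) with p ∈ ℤ[x], q ∈ ℤ[y], and r ∈ ℤ[x,y]. -/
/-!
Restricting to the two lines `y = 1` and `x = 1` through `(1, 1)` reads off `p` and `q`: on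
`y = 1` the expression becomes `p(x)(x−1)`, on `x = 1` it becomes `q(y)(y−1)`. This gives
uniqueness after cancelling the non-zero-divisors `x−1` and `y−1`. For existence, write
`s = a(x−1) + b(y−1)` and split `a = a(x,1) + (y−1)a'` and `b = b(1,y) + (x−1)b'`.
-/

open MvPolynomial

noncomputable section

namespace MvPolynomial

variable {R σ : Type*} [CommRing R] [DecidableEq σ]

/-- Restriction to the line through `(1, …, 1)` parallel to the `i`-th axis, parametrised by
`X i`. -/
def restrictLine (i : σ) : MvPolynomial σ R →ₐ[R] Polynomial R :=
  aeval fun j => if j = i then Polynomial.X else 1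

@[simp]
lemma restrictLine_X_self (i : σ) : restrictLine i (X i : MvPolynomial σ R) = Polynomial.X := by
  simp [restrictLine]

lemma restrictLine_X_of_ne {i j : σ} (h : j ≠ i) :
    restrictLine i (X j : MvPolynomial σ R) = 1 := by
  simp [restrictLine, h]

@[simp]
lemma restrictLine_aeval_X (i : σ) (p : Polynomial R) :
    restrictLine i (Polynomial.aeval (X i : MvPolynomial σ R) p) = p := by
  rw [← Polynomial.aeval_algHom_apply, restrictLine_X_self, Polynomial.aeval_X_left_apply]

lemma X_sub_one_dvd_sub_aeval_restrictLine {i j : σ} (hj : ∀ k, k ≠ i → k = j)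
    (f : MvPolynomial σ R) : X j - 1 ∣ f - Polynomial.aeval (X i) (restrictLine i f) := by
  let π := Ideal.Quotient.mkₐ R (Ideal.span {(X j - 1 : MvPolynomial σ R)})
  have hπ : π.comp ((Polynomial.aeval (X i)).comp (restrictLine i)) = π := by
    refine algHom_ext fun k => ?_
    by_cases hk : k = i
    · subst hk; simp
    · obtain rfl := hj k hk
      simp only [AlgHom.comp_apply, restrictLine_X_of_ne hk, map_one]
      exact (Ideal.Quotient.eq.mpr (Ideal.mem_span_singleton_self _)).symm
  rw [← Ideal.mem_span_singleton, ← Ideal.Quotient.eq]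
  exact (DFunLike.congr_fun hπ f).symm

end MvPolynomial

section

variable {R : Type*} [CommRing R]

def ofTriple (pqr : Polynomial R × Polynomial R × MvPolynomial (Fin 2) R) :
    MvPolynomial (Fin 2) R :=
  Polynomial.aeval (X (0 : Fin 2)) pqr.1 * (X 0 - 1)
    + Polynomial.aeval (X (1 : Fin 2)) pqr.2.1 * (X 1 - 1)
    + pqr.2.2 * (X 0 - 1) * (X 1 - 1)

lemma exists_ofTriple_eq {s : MvPolynomial (Fin 2) R}
    (hs : s ∈ Ideal.span {X 0 - 1, X 1 - 1}) : ∃ pqr, ofTriple pqr = s := by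
  obtain ⟨a, b, rfl⟩ := Ideal.mem_span_pair.mp hs
  obtain ⟨a', ha⟩ := X_sub_one_dvd_sub_aeval_restrictLine (i := 0) (j := 1) (by decide) a
  obtain ⟨b', hb⟩ := X_sub_one_dvd_sub_aeval_restrictLine (i := 1) (j := 0) (by decide) b
  exact ⟨(restrictLine 0 a, restrictLine 1 b, a' + b'), by
    simp only [ofTriple]; linear_combination (-(X 0 - 1)) * ha - (X 1 - 1) * hb⟩

lemma ofTriple_injective [IsDomain R] :
    Function.Injective (ofTriple (R := R)) := by
  rintro ⟨p₁, q₁, r₁⟩ ⟨p₂, q₂, r₂⟩ h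
  have hX : (Polynomial.X - 1 : Polynomial R) ≠ 0 := Polynomial.X_sub_C_ne_zero 1
  have hp : p₁ = p₂ := by
    simpa [ofTriple, restrictLine_X_of_ne, hX] using congrArg (restrictLine 0) h
  have hq : q₁ = q₂ := by
    simpa [ofTriple, restrictLine_X_of_ne, hX] using congrArg (restrictLine 1) h
  have hx : (X 0 - 1 : MvPolynomial (Fin 2) R) ≠ 0 := fun h0 => hX (by
    simpa using congrArg (restrictLine 0) h0)
  have hy : (X 1 - 1 : MvPolynomial (Fin 2) R) ≠ 0 := fun h1 => hX (by
    simpa using congrArg (restrictLine 1) h1)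
  have hr : r₁ = r₂ := by
    simpa [ofTriple, hp, hq, hx, hy] using h
  rw [hp, hq, hr]

end

/-- In `ℤ[x,y]`, every element of the ideal `(x−1, y−1)` has a unique expression
`p(x)(x−1) + q(y)(y−1) + r(x,y)(x−1)(y−1)` with `p ∈ ℤ[x]`, `q ∈ ℤ[y]`, `r ∈ ℤ[x,y]`. -/
theorem stmt6 (s : MvPolynomial (Fin 2) ℤ)
    (hs : s ∈ Ideal.span ({X 0 - 1, X 1 - 1} : Set (MvPolynomial (Fin 2) ℤ))) :
    ∃! pqr : Polynomial ℤ × Polynomial ℤ × MvPolynomial (Fin 2) ℤ,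
      s = Polynomial.aeval (X (0 : Fin 2)) pqr.1 * (X 0 - 1)
        + Polynomial.aeval (X (1 : Fin 2)) pqr.2.1 * (X 1 - 1)
        + pqr.2.2 * (X 0 - 1) * (X 1 - 1) := by
  obtain ⟨pqr, hpqr⟩ := exists_ofTriple_eq hs
  refine ⟨pqr, hpqr.symm, fun pqr' h => ?_⟩
  exact ofTriple_injective (a₁ := pqr') (h.symm.trans hpqr.symm)
end
end

section
/- Let k be a field and R = k[x^{±1}, y^{±1}] the Laurent polynomial ring in two variables. Let (F_i) be the Fibonacci sequence with F₀ = 0, F₁ = 1, F_{i} = F_{i−1} + F_{i−2}. Then the intersection of the principal ideals ⟨x^{F_{i+1}} − y^{F_i}⟩ over all i ≥ 1 is the zero ideal. -/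
/-- The Laurent polynomial ring `k[x^{±1}, y^{±1}]`, i.e. the group algebra of `ℤ²`. -/
abbrev Laurent2 (k : Type*) [Field k] := AddMonoidAlgebra k (ℤ × ℤ)

/-- The variable `x`. -/
noncomputable def Lx (k : Type*) [Field k] : Laurent2 k := AddMonoidAlgebra.single (1, 0) 1

/-- The variable `y`. -/
noncomputable def Ly (k : Type*) [Field k] : Laurent2 k := AddMonoidAlgebra.single (0, 1) 1


/-!
The ring map `k[x^{±1}, y^{±1}] → k[t^{±1}]`, `x ↦ t^m`, `y ↦ t^n`, kills `x^n - y^m`, and when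
`m, n` are coprime it is injective on the Laurent polynomials whose `x`-exponents `a` satisfy
`2|a| < n`: two monomials `x^a y^b`, `x^a' y^b'` with the same image have `n ∣ (a - a') m`, so
`a = a'`. Consecutive Fibonacci numbers are coprime and `F_{i+1}` is unbounded, so every fixed
Laurent polynomial in all the ideals `⟨x^{F_{i+1}} - y^{F_i}⟩` is sent to zero by an injective map.
-/

open AddMonoidAlgebra

theorem AddMonoidAlgebra.eq_zero_of_mapDomain_eq_zero {R M N : Type*} [Semiring R] {f : M → N}
    {x : AddMonoidAlgebra R M} (hf : Set.InjOn f x.coeff.support) (hx : mapDomain f x = 0) :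
    x = 0 := by
  classical
  have hsupp : (Finsupp.mapDomain f x.coeff).support = x.coeff.support.image f :=
    Finsupp.mapDomain_support_of_injOn x.coeff hf
  rw [mapDomain, ofCoeff_eq_zero] at hx
  rw [hx, Finsupp.support_zero, eq_comm, Finset.image_eq_empty, Finsupp.support_eq_empty] at hsupp
  rw [← ofCoeff_coeff x, hsupp]
  rfl

def weightHom (m n : ℤ) : ℤ × ℤ →+ ℤ :=
  (AddMonoidHom.mulRight m).coprod (AddMonoidHom.mulRight n)

@[simp]
theorem weightHom_apply (m n : ℤ) (z : ℤ × ℤ) : weightHom m n z = z.1 * m + z.2 * n := rfl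

theorem weightHom_injOn {m n : ℤ} (hmn : IsCoprime m n) :
    Set.InjOn (weightHom m n) {z | 2 * |z.1| < |n|} := by
  intro z hz w hw hzw
  simp only [Set.mem_ofPred_eq] at hz hw
  simp only [weightHom_apply] at hzw
  have hdvd : n ∣ (z.1 - w.1) * m := ⟨w.2 - z.2, by linear_combination hzw⟩
  have h1 : z.1 = w.1 := sub_eq_zero.1 <|
    Int.eq_zero_of_abs_lt_dvd ((abs_dvd n _).2 (hmn.symm.dvd_of_dvd_mul_right hdvd))
      (by linarith [abs_sub z.1 w.1])
  have hn : n ≠ 0 := abs_pos.1 (by linarith [abs_nonneg z.1])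
  have h2 : z.2 = w.2 := mul_right_cancel₀ hn (by rw [h1] at hzw; linarith)
  exact Prod.ext h1 h2

section Laurent2

variable {k : Type*} [Field k]

theorem Lx_pow (n : ℕ) : Lx k ^ n = single ((n : ℤ), 0) 1 := by
  simp [Lx, single_pow]

theorem Ly_pow (n : ℕ) : Ly k ^ n = single (0, (n : ℤ)) 1 := by
  simp [Ly, single_pow]

theorem mapDomainRingHom_weightHom_Lx_pow_sub_Ly_pow (m n : ℕ) :
    mapDomainRingHom k (weightHom m n) (Lx k ^ n - Ly k ^ m) = 0 := by
  rw [Lx_pow, Ly_pow, map_sub, sub_eq_zero]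
  simp [mul_comm]

theorem eq_zero_of_mem_span_Lx_pow_sub_Ly_pow {m n : ℕ} (hmn : m.Coprime n) {f : Laurent2 k}
    (hf : f ∈ Ideal.span {Lx k ^ n - Ly k ^ m}) (hsupp : ∀ z ∈ f.coeff.support, 2 * |z.1| < n) :
    f = 0 := by
  obtain ⟨g, rfl⟩ := Ideal.mem_span_singleton'.mp hf
  refine eq_zero_of_mapDomain_eq_zero (f := weightHom m n) ?_ ?_
  · exact (weightHom_injOn (Nat.isCoprime_iff_coprime.2 hmn)).mono
      fun z hz => by simpa using hsupp z hz
  · exact (map_mul (mapDomainRingHom k (weightHom m n)) g _).trans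
      (by rw [mapDomainRingHom_weightHom_Lx_pow_sub_Ly_pow, mul_zero])

end Laurent2

/-- With `(F i)` the Fibonacci sequence, the intersection of the principal ideals
`⟨x^{F_{i+1}} − y^{F_i}⟩` of `k[x^{±1}, y^{±1}]` over all `i ≥ 1` is the zero ideal. -/
theorem stmt7 (k : Type*) [Field k] :
    (⨅ (i : ℕ) (_ : 1 ≤ i),
        Ideal.span ({Lx k ^ Nat.fib (i + 1) - Ly k ^ Nat.fib i} : Set (Laurent2 k))) = ⊥ := by
  refine (Submodule.eq_bot_iff _).2 fun f hf => ?_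
  simp only [Ideal.mem_iInf] at hf
  set N := f.coeff.support.sup fun z => z.1.natAbs
  have hfib : 2 * N + 6 ≤ Nat.fib (2 * N + 5 + 1) := Nat.le_fib_self (by omega)
  refine eq_zero_of_mem_span_Lx_pow_sub_Ly_pow (Nat.fib_coprime_fib_succ _)
    (hf (2 * N + 5) (by omega)) fun z hz => ?_
  have hz : z.1.natAbs ≤ N := Finset.le_sup (f := fun z => z.1.natAbs) hz
  rw [Int.abs_eq_natAbs]
  omega
end

section
/- Let k be a field and σ the k-algebra automorphism of R = k[x^{±1}, y^{±1}] determined by σ(x) = y, σ(y) = xy. If s ∈ R satisfies (x − 1) ∣ σ^j(s) for all j ≥ 0, then s = 0. -/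
/-- The automorphism `(a,b) ↦ (b, a+b)` of `ℤ²` (the matrix `[[0,1],[1,1]]`),
corresponding to the substitution `x ↦ y`, `y ↦ xy`. -/
def fibAut : (ℤ × ℤ) ≃+ (ℤ × ℤ) where
  toFun v := (v.2, v.1 + v.2)
  invFun w := (w.2 - w.1, w.1)
  left_inv := by intro v; simp
  right_inv := by intro w; simp
  map_add' := by intro v w; simp [Prod.ext_iff]; ring

/-- The `k`-algebra automorphism `σ` of `k[x^{±1}, y^{±1}]` with `σ(x) = y`, `σ(y) = xy`. -/
noncomputable def sigmaSub (k : Type*) [Field k] : Laurent2 k ≃ₐ[k] Laurent2 k :=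
  AddMonoidAlgebra.domCongr k k fibAut

/-!
Evaluation at `x = 1`, the ring map induced by `(a, b) ↦ b`, kills every multiple of `x - 1` and
sends `σ^j s` to the pushforward of `s` along `v ↦ (A^j v)₂`, where `A = [[0,1],[1,1]]`. Since
`(A^j v)₂ = F_j v₁ + F_{j+1} v₂`, for `v ≠ 0` this vanishes for at most one `j` (after a zero the
sequence is a nonzero multiple of the Fibonacci numbers). Applied to the differences of the finitely
many points of the support of `s`, this makes `v ↦ (A^j v)₂` injective on that support for all large
`j`, and an injective pushforward of `s` vanishes only if `s = 0`.
-/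

open Filter

lemma snd_fibAut_iterate (n : ℕ) (v : ℤ × ℤ) :
    ((⇑fibAut)^[n] v).2 = Nat.fib n * v.1 + Nat.fib (n + 1) * v.2 := by
  induction n generalizing v with
  | zero => simp
  | succ n ih =>
    rw [Function.iterate_succ_apply, ih, Nat.fib_add_two]
    simp only [fibAut, AddEquiv.coe_mk, Equiv.coe_fn_mk]
    push_cast
    ring

lemma subsingleton_setOf_snd_fibAut_iterate_eq_zero {d : ℤ × ℤ} (hd : d ≠ 0) :
    {j | ((⇑fibAut)^[j] d).2 = 0}.Subsingleton := by
  intro i (hi : _ = _) j (hj : _ = _)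
  by_contra hne
  wlog hij : i < j generalizing i j
  · exact this hj hi (Ne.symm hne) (by omega)
  obtain ⟨n, rfl⟩ := Nat.exists_eq_add_of_lt hij
  set w := (⇑fibAut)^[i] d
  have hw : w ≠ 0 := fun h0 =>
    hd (fibAut.injective.iterate i (h0.trans (iterate_map_zero fibAut i).symm))
  rw [add_assoc, add_comm, Function.iterate_add_apply, snd_fibAut_iterate, hi, mul_zero,
    add_zero, mul_eq_zero] at hj
  exact hw (Prod.ext (hj.resolve_left (by exact_mod_cast (Nat.fib_pos.2 n.succ_pos).ne')) hi)

lemma eventually_injOn_snd_fibAut_iterate {S : Set (ℤ × ℤ)} (hS : S.Finite) :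
    ∀ᶠ j in atTop, S.InjOn fun v => ((⇑fibAut)^[j] v).2 := by
  have hsep : ∀ᶠ j in atTop, ∀ p ∈ S ×ˢ S, p.1 ≠ p.2 → ((⇑fibAut)^[j] (p.1 - p.2)).2 ≠ 0 := by
    refine (hS.prod hS).eventually_all.2 fun p _ => ?_
    by_cases hp : p.1 = p.2
    · exact .of_forall fun _ hne => absurd hp hne
    · rw [← Nat.cofinite_eq_atTop]
      exact ((subsingleton_setOf_snd_fibAut_iterate_eq_zero (sub_ne_zero.2 hp)).finite
        |>.eventually_cofinite_notMem).mono fun _ hj _ => hj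
  refine hsep.mono fun j hj v hv w hw hvw => by_contra fun hne => hj (v, w) ⟨hv, hw⟩ hne ?_
  rw [iterate_map_sub, Prod.snd_sub, sub_eq_zero]
  exact hvw

namespace AddMonoidAlgebra

lemma mapDomain_mapDomain {R M N O : Type*} [Semiring R] (f : M → N) (g : N → O) (p : R[M]) :
    mapDomain g (mapDomain f p) = mapDomain (g ∘ f) p :=
  congrArg ofCoeff Finsupp.mapDomain_comp.symm

lemma eq_zero_of_mapDomain_eq_zero_s10 {R M N : Type*} [Semiring R] {f : M → N} {p : R[M]}
    (hf : Set.InjOn f p.coeff.support) (hp : mapDomain f p = 0) : p = 0 := by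
  apply coeff_injective
  refine Finsupp.mapDomain_injOn _ hf Set.Subset.rfl (by simp) ?_
  simpa using congrArg coeff hp

end AddMonoidAlgebra

open AddMonoidAlgebra

lemma sigmaSub_iterate_apply (k : Type*) [Field k] (j : ℕ) (p : Laurent2 k) :
    (⇑(sigmaSub k))^[j] p = mapDomain (⇑fibAut)^[j] p := by
  induction j with
  | zero => ext; simp [Finsupp.mapDomain_id]
  | succ j ih =>
    rw [Function.iterate_succ_apply', ih, Function.iterate_succ', ← mapDomain_mapDomain]
    rfl

lemma mapDomain_snd_eq_zero_of_dvd {k : Type*} [Field k] {p : Laurent2 k} (h : Lx k - 1 ∣ p) :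
    mapDomain Prod.snd p = 0 := by
  obtain ⟨t, rfl⟩ := h
  have hx : mapDomainRingHom k (AddMonoidHom.snd ℤ ℤ) (Lx k) = 1 := by
    rw [Lx, mapDomainRingHom_apply, mapDomain_single]
    rfl
  change mapDomainRingHom k (AddMonoidHom.snd ℤ ℤ) _ = 0
  rw [map_mul, map_sub, map_one, hx, sub_self, zero_mul]

/-- If `s ∈ k[x^{±1}, y^{±1}]` is such that `(x − 1) ∣ σ^j(s)` for all `j ≥ 0`,
where `σ(x) = y`, `σ(y) = xy`, then `s = 0`. -/
theorem stmt10 (k : Type*) [Field k] (s : Laurent2 k)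
    (h : ∀ j : ℕ, (Lx k - 1) ∣ (⇑(sigmaSub k))^[j] s) : s = 0 := by
  obtain ⟨j, hj⟩ := (eventually_injOn_snd_fibAut_iterate s.coeff.support.finite_toSet).exists
  have hzero := mapDomain_snd_eq_zero_of_dvd (h j)
  rw [sigmaSub_iterate_apply, mapDomain_mapDomain] at hzero
  exact eq_zero_of_mapDomain_eq_zero_s10 hj hzero
end

section
/- Let p be a prime and R = 𝔽_p[x^{±1}, y^{±1}]. Let I = (x−1, y−1) be the augmentation ideal, let f₁ : I → R be the additive map sending s = p(x)(x−1) + q(y)(y−1) + r(x,y)(x−1)(y−1) (unique such decomposition with p ∈ 𝔽_p[x], q ∈ 𝔽_p[y], r ∈ 𝔽_p[x,y], after clearing denominators) to q(y), and let σ be the automorphism of R with σ(x)=y, σ(y)=xy. Then there is no nonzero ideal J of R with J ⊆ I, σ(J) = J, and f₁(J) ⊆ J. -/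
/-!
Weight the monomial `x^a y^b` by `a + b`, and let the spread of a nonzero Laurent polynomial be
the largest minus the smallest weight on its support. Multiplying by `x^a y^b - 1` with
`a + b > 0` raises the spread by at least `a + b`, since the extreme monomials cannot cancel.

If `Q ∈ J` is a Laurent polynomial in `y` alone, it vanishes at `y = 1` (as `J ⊆ I`), so
`Q = Q₁ (y - 1)` with `Q₁ = f₁ Q ∈ J` of smaller spread; by descent `Q = 0`. Hence `f₁` kills
`J`, i.e. the `y`-part of every `a ∈ J` vanishes and `x - 1 ∣ a`. Applying `σⁿ`, every element
of `J` is divisible by `σⁿ(x) - 1`, a monomial minus one whose weight is a Fibonacci number.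
So a nonzero element of `J` would have unbounded spread.
-/

/-- The Laurent polynomial ring `R = 𝔽_p[x^{±1}, y^{±1}]`. -/
abbrev LaurentP (p : ℕ) := AddMonoidAlgebra (ZMod p) (ℤ × ℤ)

/-- The variable `x`. -/
noncomputable def lx (p : ℕ) : LaurentP p := AddMonoidAlgebra.single (1, 0) 1
/-- The variable `x⁻¹`. -/
noncomputable def lxinv (p : ℕ) : LaurentP p := AddMonoidAlgebra.single (-1, 0) 1
/-- The variable `y`. -/
noncomputable def ly (p : ℕ) : LaurentP p := AddMonoidAlgebra.single (0, 1) 1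
/-- The variable `y⁻¹`. -/
noncomputable def lyinv (p : ℕ) : LaurentP p := AddMonoidAlgebra.single (0, -1) 1

/-- The algebra automorphism `σ` of `R` with `σ(x) = y`, `σ(y) = xy`. -/
noncomputable def sigmaP (p : ℕ) : LaurentP p ≃ₐ[ZMod p] LaurentP p :=
  AddMonoidAlgebra.domCongr (ZMod p) (ZMod p) fibAut

theorem Algebra.exists_mem_adjoin_eq_algebraMap_add_mul_sub_one {k A : Type*} [CommRing k]
    [CommRing A] [Algebra k A] (ε : A →ₐ[k] k) {y y' : A} (hyy' : y * y' = 1) (hεy : ε y = 1) :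
    ∀ Q ∈ Algebra.adjoin k {y, y'},
      ∃ Q₁ ∈ Algebra.adjoin k {y, y'}, Q = algebraMap k A (ε Q) + Q₁ * (y - 1) := by
  have hεy' : ε y' = 1 := by simpa [hεy] using congrArg ε hyy'
  intro Q hQ
  induction hQ using Algebra.adjoin_induction with
  | mem x hx =>
    rcases hx with rfl | hx
    · exact ⟨1, one_mem _, by simp [hεy]⟩
    · rw [Set.mem_singleton_iff.1 hx]
      refine ⟨-y', neg_mem (Algebra.subset_adjoin (by simp)), ?_⟩
      rw [hεy', map_one]
      linear_combination hyy'
  | algebraMap r => exact ⟨0, zero_mem _, by simp⟩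
  | add x x' _ _ ih ih' =>
    obtain ⟨Q, hQ, hx⟩ := ih
    obtain ⟨Q', hQ', hx'⟩ := ih'
    refine ⟨Q + Q', add_mem hQ hQ', ?_⟩
    rw [map_add, map_add]
    linear_combination hx + hx'
  | mul x x' hx _ ih ih' =>
    obtain ⟨Q, hQ, ex⟩ := ih
    obtain ⟨Q', hQ', ex'⟩ := ih'
    refine ⟨x * Q' + algebraMap k A (ε x') * Q,
      add_mem (mul_mem hx hQ') (mul_mem (Subalgebra.algebraMap_mem _ _) hQ), ?_⟩
    rw [map_mul, map_mul]
    linear_combination x * ex' + algebraMap k A (ε x') * ex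

namespace AddMonoidAlgebra

section Generators

variable {k G : Type*} [CommRing k] [AddCommGroup G]

theorem single_add_eq_single_mul_single (a b : G) :
    single (a + b) (1 : k) = single a 1 * single b 1 := by
  rw [single_mul_single, mul_one]

theorem single_sub_one_dvd_single_zsmul_sub_one (g : G) (n : ℤ) :
    single g (1 : k) - 1 ∣ single (n • g) 1 - 1 := by
  induction n using Int.induction_on with
  | zero => simp [one_def]
  | succ n ih =>
    have h : single (((n : ℤ) + 1) • g) (1 : k) - 1 =
        single ((n : ℤ) • g) 1 * (single g 1 - 1) + (single ((n : ℤ) • g) 1 - 1) := by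
      rw [add_smul, one_smul, single_add_eq_single_mul_single]; ring
    exact h ▸ dvd_add (dvd_mul_left _ _) ih
  | pred n ih =>
    have h : single ((-(n : ℤ) - 1) • g) (1 : k) - 1 =
        (single (-(n : ℤ) • g) 1 - 1) - single ((-(n : ℤ) - 1) • g) 1 * (single g 1 - 1) := by
      have hsplit : single (-(n : ℤ) • g) (1 : k) = single ((-(n : ℤ) - 1) • g) 1 * single g 1 := by
        rw [← single_add_eq_single_mul_single, sub_smul, one_smul, sub_add_cancel]
      rw [hsplit]; ring
    exact h ▸ dvd_sub ih (dvd_mul_left _ _)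

theorem single_zsmul_mem_adjoin (g : G) (n : ℤ) (c : k) :
    single (n • g) c ∈ Algebra.adjoin k {single g (1 : k), single (-g) 1} := by
  rw [← mul_one c, ← smul_eq_mul, ← smul_single]
  refine Subalgebra.smul_mem _ ?_ c
  induction n using Int.induction_on with
  | zero => simpa [one_def] using one_mem (Algebra.adjoin k {single g (1 : k), single (-g) 1})
  | succ n ih =>
    rw [add_smul, one_smul, single_add_eq_single_mul_single]
    exact mul_mem ih (Algebra.subset_adjoin (by simp))
  | pred n ih =>
    rw [sub_smul, one_smul, sub_eq_add_neg, single_add_eq_single_mul_single]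
    exact mul_mem ih (Algebra.subset_adjoin (by simp))

theorem exists_mem_adjoin_single_sub_one_dvd_sub (g h : G)
    (hgh : ∀ v : G, ∃ a b : ℤ, v = a • g + b • h) (u : k[G]) :
    ∃ P ∈ Algebra.adjoin k {single g (1 : k), single (-g) 1}, single h 1 - 1 ∣ u - P := by
  induction u using induction_linear with
  | zero => exact ⟨0, zero_mem _, by simp⟩
  | add u u' ih ih' =>
    obtain ⟨P, hP, hu⟩ := ih
    obtain ⟨P', hP', hu'⟩ := ih'
    exact ⟨P + P', add_mem hP hP', by simpa [add_sub_add_comm] using dvd_add hu hu'⟩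
  | single v c =>
    obtain ⟨a, b, rfl⟩ := hgh v
    refine ⟨single (a • g) c, single_zsmul_mem_adjoin g a c, ?_⟩
    have hsplit : single (a • g + b • h) c - single (a • g) c =
        single (a • g) c * (single (b • h) 1 - 1) := by
      rw [mul_sub, single_mul_single, mul_one, mul_one]
    exact hsplit ▸ dvd_mul_of_dvd_right (single_sub_one_dvd_single_zsmul_sub_one h b) _

end Generators

section Weight

variable {k G : Type*} [Ring k] [AddCommGroup G] (φ : G →+ ℤ)

/-- The spread `max φ - min φ` of the weights on the support of `f` (`0` for `f = 0`),
written as a supremum over pairs so that it needs no nonemptiness proof. -/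
def weightSpread (f : k[G]) : ℕ :=
  f.coeff.support.sup fun u ↦ f.coeff.support.sup fun v ↦ (φ u - φ v).toNat

theorem sub_le_weightSpread {f : k[G]} {u v : G} (hu : u ∈ f.coeff.support)
    (hv : v ∈ f.coeff.support) : φ u - φ v ≤ weightSpread φ f := by
  have h : (φ u - φ v).toNat ≤ weightSpread φ f :=
    (Finset.le_sup (f := fun v ↦ (φ u - φ v).toNat) hv).trans
      (Finset.le_sup (f := fun u ↦ f.coeff.support.sup fun v ↦ (φ u - φ v).toNat) hu)
  omega

variable {φ}

theorem weightSpread_add_le_weightSpread_single_sub_one_mul {g : G} (hg : 0 < φ g)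
    {t : k[G]} (ht : t ≠ 0) :
    (weightSpread φ t : ℤ) + φ g ≤ weightSpread φ ((single g 1 - 1) * t) := by
  have hne : t.coeff.support.Nonempty := by simpa using ht
  obtain ⟨u, hu, hmax⟩ := Finset.exists_max_image _ φ hne
  obtain ⟨v, hv, hmin⟩ := Finset.exists_min_image _ φ hne
  have hcoeff (w : G) : ((single g 1 - 1) * t).coeff w = t.coeff (w - g) - t.coeff w := by
    rw [sub_one_mul, coeff_sub, Finsupp.sub_apply, coeff_single_mul_apply, one_mul,
      neg_add_eq_sub]
  have hspread : (weightSpread φ t : ℤ) ≤ φ u - φ v := by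
    have : weightSpread φ t ≤ (φ u - φ v).toNat :=
      Finset.sup_le fun a ha ↦ Finset.sup_le fun b hb ↦
        Int.toNat_le_toNat (by linarith [hmax a ha, hmin b hb])
    have := hmin u hu
    omega
  -- Above the top weight and below the bottom weight of `t` nothing cancels.
  have hug : u + g ∈ ((single g 1 - 1) * t).coeff.support := by
    have h0 : t.coeff (u + g) = 0 := by
      by_contra h
      have := hmax _ (Finsupp.mem_support_iff.2 h)
      rw [map_add] at this
      omega
    simpa [hcoeff, h0] using hu
  have hv' : v ∈ ((single g 1 - 1) * t).coeff.support := by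
    have h0 : t.coeff (v - g) = 0 := by
      by_contra h
      have := hmin _ (Finsupp.mem_support_iff.2 h)
      rw [map_sub] at this
      omega
    simpa [hcoeff, h0] using hv
  have := sub_le_weightSpread φ hug hv'
  rw [map_add] at this
  omega

theorem le_weightSpread_of_single_sub_one_dvd {g : G} (hg : 0 < φ g) {s : k[G]} (hs : s ≠ 0)
    (hdvd : single g 1 - 1 ∣ s) : φ g ≤ weightSpread φ s := by
  obtain ⟨t, rfl⟩ := hdvd
  have ht : t ≠ 0 := by rintro rfl; exact hs (mul_zero _)
  have := weightSpread_add_le_weightSpread_single_sub_one_mul hg ht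
  omega

end Weight

end AddMonoidAlgebra

open AddMonoidAlgebra

def coordSum : ℤ × ℤ →+ ℤ := (AddMonoidHom.id ℤ).coprod (AddMonoidHom.id ℤ)

theorem coordSum_apply (v : ℤ × ℤ) : coordSum v = v.1 + v.2 := rfl

-- `fibAut^[n] (1, 0) = (F (n - 1), F n)` for the Fibonacci numbers `F`.
theorem le_coordSum_fibAut_iterate (n : ℕ) : (n : ℤ) + 1 ≤ coordSum (fibAut^[n + 1] (1, 0)) := by
  suffices h : 0 ≤ (fibAut^[n + 1] (1, 0)).1 ∧ 1 ≤ (fibAut^[n + 1] (1, 0)).2 ∧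
      (n : ℤ) + 1 ≤ coordSum (fibAut^[n + 1] (1, 0)) from h.2.2
  induction n with
  | zero => simp [fibAut, coordSum_apply]
  | succ n ih =>
    rw [Function.iterate_succ_apply']
    simp only [fibAut, AddEquiv.coe_mk, Equiv.coe_fn_mk, coordSum_apply] at ih ⊢
    omega

section Laurent

variable {p : ℕ}

theorem exists_decomposition_of_mem_span {a : LaurentP p}
    (ha : a ∈ Ideal.span ({lx p - 1, ly p - 1} : Set (LaurentP p))) :
    ∃ P ∈ Algebra.adjoin (ZMod p) ({lx p, lxinv p} : Set (LaurentP p)),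
      ∃ Q ∈ Algebra.adjoin (ZMod p) ({ly p, lyinv p} : Set (LaurentP p)),
      ∃ r : LaurentP p, a = P * (lx p - 1) + Q * (ly p - 1) + r * (lx p - 1) * (ly p - 1) := by
  obtain ⟨u, v, rfl⟩ := Ideal.mem_span_pair.1 ha
  obtain ⟨P, hP, w, hw⟩ : ∃ P ∈ Algebra.adjoin (ZMod p) ({lx p, lxinv p} : Set (LaurentP p)),
      ly p - 1 ∣ u - P :=
    exists_mem_adjoin_single_sub_one_dvd_sub (1, 0) (0, 1) (fun v ↦ ⟨v.1, v.2, by simp⟩) u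
  obtain ⟨Q, hQ, w', hw'⟩ : ∃ Q ∈ Algebra.adjoin (ZMod p) ({ly p, lyinv p} : Set (LaurentP p)),
      lx p - 1 ∣ v - Q :=
    exists_mem_adjoin_single_sub_one_dvd_sub (0, 1) (1, 0) (fun v ↦ ⟨v.2, v.1, by simp⟩) v
  refine ⟨P, hP, Q, hQ, w + w', ?_⟩
  linear_combination (lx p - 1) * hw + (ly p - 1) * hw'

theorem exists_mem_adjoin_eq_mul_ly_sub_one {Q : LaurentP p}
    (hQ : Q ∈ Algebra.adjoin (ZMod p) ({ly p, lyinv p} : Set (LaurentP p)))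
    (hQI : Q ∈ Ideal.span ({lx p - 1, ly p - 1} : Set (LaurentP p))) :
    ∃ Q₁ ∈ Algebra.adjoin (ZMod p) ({ly p, lyinv p} : Set (LaurentP p)), Q = Q₁ * (ly p - 1) := by
  let ε : LaurentP p →ₐ[ZMod p] ZMod p := lift (ZMod p) (ZMod p) (ℤ × ℤ) 1
  have hε (v : ℤ × ℤ) : ε (single v 1) = 1 := by simp [ε, lift_single]
  have hεI : Ideal.span ({lx p - 1, ly p - 1} : Set (LaurentP p)) ≤ RingHom.ker ε :=
    Ideal.span_le.2 (by simp [Set.insert_subset_iff, lx, ly, hε])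
  have hyy' : ly p * lyinv p = 1 := by
    rw [ly, lyinv, single_mul_single, one_mul, one_def]
    rfl
  obtain ⟨Q₁, hQ₁, hQ⟩ :=
    Algebra.exists_mem_adjoin_eq_algebraMap_add_mul_sub_one ε hyy' (hε _) Q hQ
  rw [RingHom.mem_ker.1 (hεI hQI), map_zero, zero_add] at hQ
  exact ⟨Q₁, hQ₁, hQ⟩

section InvariantIdeal

variable {f₁ : LaurentP p →+ LaurentP p} {J : Ideal (LaurentP p)}

theorem eq_zero_of_mem_of_mem_adjoin
    (hf₁ : ∀ P ∈ Algebra.adjoin (ZMod p) ({lx p, lxinv p} : Set (LaurentP p)),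
      ∀ Q ∈ Algebra.adjoin (ZMod p) ({ly p, lyinv p} : Set (LaurentP p)),
      ∀ r : LaurentP p,
        f₁ (P * (lx p - 1) + Q * (ly p - 1) + r * (lx p - 1) * (ly p - 1)) = Q)
    (hJI : J ≤ Ideal.span ({lx p - 1, ly p - 1} : Set (LaurentP p))) (hJf : ∀ a ∈ J, f₁ a ∈ J)
    {Q : LaurentP p} (hQJ : Q ∈ J)
    (hQ : Q ∈ Algebra.adjoin (ZMod p) ({ly p, lyinv p} : Set (LaurentP p))) : Q = 0 := by
  induction h : weightSpread coordSum Q using Nat.strong_induction_on generalizing Q with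
  | _ n ih =>
  by_contra hne
  obtain ⟨Q₁, hQ₁, rfl⟩ := exists_mem_adjoin_eq_mul_ly_sub_one hQ (hJI hQJ)
  have hfQ : f₁ (Q₁ * (ly p - 1)) = Q₁ := by simpa using hf₁ 0 (zero_mem _) Q₁ hQ₁ 0
  have hQ₁J : Q₁ ∈ J := hfQ ▸ hJf _ hQJ
  have hQ₁0 : Q₁ ≠ 0 := by rintro rfl; simp at hne
  have hlt : (weightSpread coordSum Q₁ : ℤ) + coordSum (0, 1) ≤
      weightSpread coordSum (Q₁ * (ly p - 1)) := by
    rw [mul_comm]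
    exact weightSpread_add_le_weightSpread_single_sub_one_mul (by simp [coordSum_apply]) hQ₁0
  rw [h, coordSum_apply] at hlt
  exact hQ₁0 (ih _ (by omega) hQ₁J hQ₁ rfl)

theorem lx_sub_one_dvd_of_mem
    (hf₁ : ∀ P ∈ Algebra.adjoin (ZMod p) ({lx p, lxinv p} : Set (LaurentP p)),
      ∀ Q ∈ Algebra.adjoin (ZMod p) ({ly p, lyinv p} : Set (LaurentP p)),
      ∀ r : LaurentP p,
        f₁ (P * (lx p - 1) + Q * (ly p - 1) + r * (lx p - 1) * (ly p - 1)) = Q)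
    (hJI : J ≤ Ideal.span ({lx p - 1, ly p - 1} : Set (LaurentP p))) (hJf : ∀ a ∈ J, f₁ a ∈ J)
    {a : LaurentP p} (ha : a ∈ J) : lx p - 1 ∣ a := by
  obtain ⟨P, hP, Q, hQ, r, rfl⟩ := exists_decomposition_of_mem_span (hJI ha)
  have hQ0 : Q = 0 := eq_zero_of_mem_of_mem_adjoin hf₁ hJI hJf (hf₁ P hP Q hQ r ▸ hJf _ ha) hQ
  exact ⟨P + r * (ly p - 1), by rw [hQ0]; ring⟩

theorem single_fibAut_sub_one_dvd_of_mem
    (hσ : ⇑(sigmaP p) '' (J : Set (LaurentP p)) = J) {g : ℤ × ℤ}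
    (hg : ∀ a ∈ J, single g (1 : ZMod p) - 1 ∣ a) {a : LaurentP p} (ha : a ∈ J) :
    single (fibAut g) (1 : ZMod p) - 1 ∣ a := by
  rw [← SetLike.mem_coe, ← hσ] at ha
  obtain ⟨b, hb, rfl⟩ := ha
  simpa [sigmaP] using map_dvd (sigmaP p) (hg b hb)

end InvariantIdeal

end Laurent

theorem stmt13_general (p : ℕ)
    (f₁ : LaurentP p →+ LaurentP p)
    (hf₁ : ∀ P ∈ Algebra.adjoin (ZMod p) ({lx p, lxinv p} : Set (LaurentP p)),
      ∀ Q ∈ Algebra.adjoin (ZMod p) ({ly p, lyinv p} : Set (LaurentP p)),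
      ∀ r : LaurentP p,
        f₁ (P * (lx p - 1) + Q * (ly p - 1) + r * (lx p - 1) * (ly p - 1)) = Q) :
    ¬∃ J : Ideal (LaurentP p), J ≠ ⊥ ∧
      (J : Set (LaurentP p)) ⊆
        (Ideal.span ({lx p - 1, ly p - 1} : Set (LaurentP p)) : Ideal (LaurentP p)) ∧
      (⇑(sigmaP p) '' (J : Set (LaurentP p)) = (J : Set (LaurentP p))) ∧
      (∀ a ∈ J, f₁ a ∈ J) := by
  rintro ⟨J, hJ0, hJI, hσ, hJf⟩
  obtain ⟨s, hsJ, hs0⟩ := Submodule.exists_mem_ne_zero_of_ne_bot hJ0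
  have hdvd (n : ℕ) : ∀ a ∈ J, single (fibAut^[n] (1, 0)) (1 : ZMod p) - 1 ∣ a := by
    induction n with
    | zero => exact fun a ha ↦ lx_sub_one_dvd_of_mem hf₁ hJI hJf ha
    | succ n ih =>
      rw [Function.iterate_succ_apply']
      exact fun a ha ↦ single_fibAut_sub_one_dvd_of_mem hσ ih ha
  -- The orbit weights grow without bound, but all of them are at most the spread of `s`.
  have hgrowth := le_coordSum_fibAut_iterate (weightSpread coordSum s)
  have hbound := le_weightSpread_of_single_sub_one_dvd (φ := coordSum) (by omega) hs0
    (hdvd (weightSpread coordSum s + 1) s hsJ)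
  omega

/-- Let `I = (x−1, y−1)` be the augmentation ideal of `R = 𝔽_p[x^{±1},y^{±1}]`,
`f₁` the additive map sending `s = P(x)(x−1) + Q(y)(y−1) + r(x,y)(x−1)(y−1)`
(with `P` a Laurent polynomial in `x` only, `Q` in `y` only; such a decomposition is
unique) to `Q`, and `σ` the automorphism with `σ(x)=y`, `σ(y)=xy`.  Then there is no
nonzero ideal `J` of `R` with `J ⊆ I`, `σ(J) = J` and `f₁(J) ⊆ J`. -/
theorem stmt13 (p : ℕ) [Fact p.Prime]
    (f₁ : LaurentP p →+ LaurentP p)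
    (hf₁ : ∀ P ∈ Algebra.adjoin (ZMod p) ({lx p, lxinv p} : Set (LaurentP p)),
      ∀ Q ∈ Algebra.adjoin (ZMod p) ({ly p, lyinv p} : Set (LaurentP p)),
      ∀ r : LaurentP p,
        f₁ (P * (lx p - 1) + Q * (ly p - 1) + r * (lx p - 1) * (ly p - 1)) = Q) :
    ¬∃ J : Ideal (LaurentP p), J ≠ ⊥ ∧
      (J : Set (LaurentP p)) ⊆
        (Ideal.span ({lx p - 1, ly p - 1} : Set (LaurentP p)) : Ideal (LaurentP p)) ∧
      (⇑(sigmaP p) '' (J : Set (LaurentP p)) = (J : Set (LaurentP p))) ∧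
      (∀ a ∈ J, f₁ a ∈ J) :=
  stmt13_general p f₁ hf₁
end
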